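/- Let P, Q, R ∈ L^(l)∖{0} and (ρ,σ) ∈ 𝔙 be such that [ℓ_{ρ,σ}(P), ℓ_{ρ,σ}(Q)] = ℓ_{ρ,σ}(R). Then: (1) st_{ρ,σ}(P) ≁ st_{ρ,σ}(Q) if and only if st_{ρ,σ}(P) + st_{ρ,σ}(Q) − (1,1) = st_{ρ,σ}(R); (2) en_{ρ,σ}(P) ≁ en_{ρ,σ}(Q) if and only if en_{ρ,σ}(P) + en_{ρ,σ}(Q) − (1,1) = en_{ρ,σ}(R). -/

import Mathlib

/-!
Formalization framework for "On the shape of possible counterexamples to the Jacobian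
Conjecture" by Guccione–Guccione–Valqui.

The algebra `L^(l) = K[x^{1/l}, x^{-1/l}, y]` is modelled as the monoid algebra of the
additive monoid `ℤ × ℕ` over `K`, where the exponent pair `(i, j)` encodes the monomial
`x^(i/l) * y^j`.
-/

open scoped Classical

set_option linter.unusedSectionVars false

noncomputable section

namespace JC

variable (K : Type*) [Field K] [CharZero K]

/-- `L^(l)`, modelled as the monoid algebra on `ℤ × ℕ`. -/
abbrev Ll := AddMonoidAlgebra K (ℤ × ℕ)

variable {K}

/-- The variable `x = (x^{1/l})^l` of `L = K[x,y] ⊆ L^(l)`. -/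
def xVar (l : ℕ) : Ll K := AddMonoidAlgebra.ofCoeff (Finsupp.single ((l : ℤ), (0 : ℕ)) (1 : K))

/-- The variable `y`. -/
def yVar : Ll K := AddMonoidAlgebra.ofCoeff (Finsupp.single ((0 : ℤ), (1 : ℕ)) (1 : K))

/-- The partial derivative `∂ₓ` on `L^(l)`:  `x^(i/l) y^j ↦ (i/l) x^(i/l - 1) y^j`. -/
def dX (l : ℕ) (P : Ll K) : Ll K :=
  AddMonoidAlgebra.ofCoeff <|
  Finsupp.sum P.coeff fun p c => Finsupp.single (p.1 - (l : ℤ), p.2) (c * ((p.1 : K) / (l : K)))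

/-- The partial derivative `∂ᵧ` on `L^(l)`. -/
def dY (P : Ll K) : Ll K :=
  AddMonoidAlgebra.ofCoeff <|
  Finsupp.sum P.coeff fun p c => Finsupp.single (p.1, p.2 - 1) (c * (p.2 : K))

/-- The Jacobian `[P,Q] = ∂ₓP ∂ᵧQ − ∂ᵧP ∂ₓQ`. -/
def br (l : ℕ) (P Q : Ll K) : Ll K := dX l P * dY Q - dY P * dX l Q

/-- `[P,Q] ∈ K^×`, i.e. the Jacobian is a nonzero constant. -/
def JacConst (l : ℕ) (P Q : Ll K) : Prop :=
  ∃ c : K, c ≠ 0 ∧ br l P Q = algebraMap K (Ll K) c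

/-- Membership in `L = K[x,y] ⊆ L^(l)`: all exponents `i/l` are nonnegative integers. -/
def InL (l : ℕ) (P : Ll K) : Prop := ∀ p ∈ P.coeff.support, 0 ≤ p.1 ∧ (l : ℤ) ∣ p.1

/-- The point `(i/l, j)` of `ℚ²` attached to an exponent pair `(i,j)`. -/
def pt (l : ℕ) (p : ℤ × ℕ) : ℚ × ℚ := ((p.1 : ℚ) / (l : ℚ), (p.2 : ℚ))

/-- The `(ρ,σ)`-degree `ρ·(i/l) + σ·j` of an exponent pair. -/
def dg (l : ℕ) (ρ σ : ℤ) (p : ℤ × ℕ) : ℚ :=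
  (ρ : ℚ) * ((p.1 : ℚ) / (l : ℚ)) + (σ : ℚ) * (p.2 : ℚ)

/-- `v_{ρ,σ}(P) ∈ WithBot ℚ`, with the convention `v_{ρ,σ}(0) = ⊥ = −∞`. -/
def v (l : ℕ) (ρ σ : ℤ) (P : Ll K) : WithBot ℚ :=
  P.coeff.support.sup fun p => ((dg l ρ σ p : ℚ) : WithBot ℚ)

/-- `ℚ`-valued `(ρ,σ)`-degree (with junk value `0` at `P = 0`). -/
def vq (l : ℕ) (ρ σ : ℤ) (P : Ll K) : ℚ := WithBot.unbotD 0 (v l ρ σ P)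

/-- The `(ρ,σ)`-leading form `ℓ_{ρ,σ}(P)`. -/
def lead (l : ℕ) (ρ σ : ℤ) (P : Ll K) : Ll K :=
  AddMonoidAlgebra.ofCoeff <|
  Finsupp.filter (fun p => ((dg l ρ σ p : ℚ) : WithBot ℚ) = v l ρ σ P) P.coeff

/-- `(ρ,σ)`-homogeneity. -/
def IsHomog (l : ℕ) (ρ σ : ℤ) (P : Ll K) : Prop := P = lead l ρ σ P

/-- Directions: coprime pairs of integers. -/
def IsDirV (d : ℤ × ℤ) : Prop := Int.gcd d.1 d.2 = 1

/-- `Dir(P)`: the set of directions in which the leading form is not a monomial. -/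
def DirSet (l : ℕ) (P : Ll K) : Set (ℤ × ℤ) :=
  {d | IsDirV d ∧ 1 < (lead l d.1 d.2 P).coeff.support.card}

/-- Cross product of two vectors of `ℚ²`. -/
def cross (A B : ℚ × ℚ) : ℚ := A.1 * B.2 - A.2 * B.1

/-- Dot product of two vectors of `ℚ²`. -/
def dot (A B : ℚ × ℚ) : ℚ := A.1 * B.1 + A.2 * B.2

/-- Alignment `A ∼ B`. -/
def Aligned (A B : ℚ × ℚ) : Prop := cross A B = 0

/-- A pair of integers viewed in `ℚ²`. -/
def dq (d : ℤ × ℤ) : ℚ × ℚ := ((d.1 : ℚ), (d.2 : ℚ))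

/-- Evaluation `v_{ρ,σ}` at a point of `ℚ²`. -/
def vpt (ρ σ : ℤ) (A : ℚ × ℚ) : ℚ := (ρ : ℚ) * A.1 + (σ : ℚ) * A.2

/-- `st_{ρ,σ}(P)`: the endpoint of the segment `Supp(ℓ_{ρ,σ}(P))` at which the
functional `(ρ,σ) × ·` is minimal (so that `(ρ,σ) × (en − st) ≥ 0`). -/
def stPt (l : ℕ) (ρ σ : ℤ) (P : Ll K) : ℚ × ℚ :=
  if h : (lead l ρ σ P).coeff.support.Nonempty then
    pt l <| Classical.choose <|
      (lead l ρ σ P).coeff.support.exists_min_image (fun p => cross (dq (ρ, σ)) (pt l p)) h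
  else (0, 0)

/-- `en_{ρ,σ}(P)`: the other endpoint of the segment `Supp(ℓ_{ρ,σ}(P))`. -/
def enPt (l : ℕ) (ρ σ : ℤ) (P : Ll K) : ℚ × ℚ :=
  if h : (lead l ρ σ P).coeff.support.Nonempty then
    pt l <| Classical.choose <|
      (lead l ρ σ P).coeff.support.exists_max_image (fun p => cross (dq (ρ, σ)) (pt l p)) h
  else (0, 0)

/-- The index (`0`–`3`) of a direction `a` in the counterclockwise sweep of the circle of
directions starting just after the base direction `u`. -/
def idx (u a : ℤ × ℤ) : ℕ :=
  if 0 < cross (dq u) (dq a) then 0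
  else if cross (dq u) (dq a) = 0 ∧ dot (dq u) (dq a) < 0 then 1
  else if cross (dq u) (dq a) < 0 then 2
  else 3

/-- The strict counterclockwise order on directions with base point `u`:  `a` is
encountered strictly before `b` when running counterclockwise starting just after `u`. -/
def ccwLt (u a b : ℤ × ℤ) : Prop :=
  idx u a < idx u b ∨ (idx u a = idx u b ∧ 0 < cross (dq a) (dq b))

/-- Reflexive closure of `ccwLt`. -/
def ccwLe (u a b : ℤ × ℤ) : Prop := a = b ∨ ccwLt u a b

/-- `w = Succ_P(u)`: the first element of `Dir(P)` encountered starting from `u` and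
running counterclockwise. -/
def IsSucc (l : ℕ) (P : Ll K) (u w : ℤ × ℤ) : Prop :=
  w ∈ DirSet l P ∧ w ≠ u ∧ ∀ w' ∈ DirSet l P, w' ≠ u → ccwLe u w w'

/-- `(m,n)`-pairs in `L^(l)`. -/
structure IsMNPair (l m n : ℕ) (P Q : Ll K) : Prop where
  coprime : Nat.Coprime m n
  one_lt_m : 1 < m
  one_lt_n : 1 < n
  jac : JacConst l P Q
  ratio11 : vq l 1 1 P / vq l 1 1 Q = (m : ℚ) / (n : ℚ)
  ratio10 : vq l 1 0 P / vq l 1 0 Q = (m : ℚ) / (n : ℚ)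
  en10 : vpt 1 (-1) (enPt l 1 0 P) < 0

/-- Standard `(m,n)`-pairs (in `L^(1)`). -/
def IsStandard (m n : ℕ) (P Q : Ll K) : Prop :=
  IsMNPair 1 m n P Q ∧ vpt 1 (-1) (stPt 1 1 0 P) < 0

/-- Membership in the interval of directions `I = ](1,−1),(1,0)]`. -/
def InI (d : ℤ × ℤ) : Prop := IsDirV d ∧ 0 < d.1 + d.2 ∧ d.2 ≤ 0

/-- Regular corners of an `(m,n)`-pair. -/
def IsRegCorner (l m : ℕ) (P : Ll K) (A : ℚ × ℚ) (d : ℤ × ℤ) : Prop :=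
  (∃ a : ℤ, ∃ b : ℕ, A = ((a : ℚ) / (l : ℚ), (b : ℚ)) ∧ 1 ≤ b ∧ (a : ℚ) / (l : ℚ) < (b : ℚ)) ∧
  InI d ∧ d ∈ DirSet l P ∧ enPt l d.1 d.2 P = ((m : ℚ) * A.1, (m : ℚ) * A.2)

/-- The set `A(P)`. -/
def ASet (l : ℕ) (P : Ll K) : Set (ℤ × ℤ) :=
  {d | d ∈ DirSet l P ∧ InI d ∧
    vpt 0 (-1) (stPt l d.1 d.2 P) < -1 ∧ vpt 1 (-1) (stPt l d.1 d.2 P) < 0}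

/-- The univariate polynomial `𝔭` with `ℓ_{ρ,σ}(P) = x^(k/l) 𝔭(z)`, `z := x^(−σ/ρ) y`
(for a `(ρ,σ)`-homogeneous element with `ρ > 0`, the `z`-degree equals the `y`-degree). -/
def toPoly (R : Ll K) : Polynomial K :=
  Finsupp.sum R.coeff fun p c => Polynomial.C c * Polynomial.X ^ p.2

/-- The minimal `y`-exponent occurring in `R`. -/
def ymin (R : Ll K) : ℕ := sInf (Prod.snd '' (R.coeff.support : Set (ℤ × ℕ)))

/-- The univariate polynomial `p` with `ℓ_{ρ,σ}(P) = x^(r/l) y^s p(z)` and `p(0) ≠ 0`. -/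
def toPolyL (R : Ll K) : Polynomial K :=
  Finsupp.sum R.coeff fun p c => Polynomial.C c * Polynomial.X ^ (p.2 - ymin R)

/-- A regular corner in direction `d` is of type II. -/
def TypeII (l : ℕ) (P Q : Ll K) (d : ℤ × ℤ) : Prop :=
  br l (lead l d.1 d.2 P) (lead l d.1 d.2 Q) = 0 ∧
    1 < (toPoly (lead l d.1 d.2 P)).roots.toFinset.card

variable (K)

/-- The polynomial subalgebra `K[x,y] ⊆ L^(1)`. -/
def polyAlg : Subalgebra K (Ll K) := Algebra.adjoin K {xVar 1, yVar}

/-- `(P,Q)` is a counterexample to the Jacobian Conjecture: `P, Q ∈ K[x,y]`, the Jacobian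
`[P,Q]` is a nonzero constant, and `K[P,Q] ≠ K[x,y]`. -/
def IsCtrex (P Q : Ll K) : Prop :=
  P ∈ polyAlg K ∧ Q ∈ polyAlg K ∧ JacConst 1 P Q ∧ Algebra.adjoin K {P, Q} ≠ polyAlg K

/-- The set of numbers `gcd(v_{1,1}(P), v_{1,1}(Q))` over all counterexamples `(P,Q)`. -/
def BSet : Set ℕ :=
  {d | ∃ P Q : Ll K, ∃ dP dQ : ℕ, IsCtrex K P Q ∧
    (dP : ℚ) = vq 1 1 1 P ∧ (dQ : ℚ) = vq 1 1 1 Q ∧ d = Nat.gcd dP dQ}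

/-- The number `B`: the minimum of `gcd(v_{1,1}(P), v_{1,1}(Q))` over all counterexamples. -/
def Bnum : ℕ := sInf (BSet K)

variable {K}


/-!
All monomials of `ℓ_{ρ,σ}(P)` lie on a line `v_{ρ,σ} = const`, along which `u × ·` with
`u = (ρ,σ)` is injective; so `st` and `en` are the unique minimizer and maximizer of `u × ·`.
The Jacobian of two monomials with exponents `A, B` is `(A × B)` times the monomial with
exponent `A + B - (1,1)`. Since `u × ·` is additive, the point `st(P) + st(Q) - (1,1)` arises
from the pair `(st(P), st(Q))` only, and every other point of the support of
`[ℓ(P), ℓ(Q)] = ℓ(R)` has a larger value of `u × ·`. Hence that point is `st(R)` exactly when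
its coefficient, proportional to `st(P) × st(Q)`, is nonzero. For `en` reverse the order.
-/

/- `[x^(p₁/l) y^p₂, x^(q₁/l) y^q₂] = (jacDet p q / l) · x^((p₁+q₁-l)/l) y^(p₂+q₂-1)`. The
truncated subtraction in `jacExp` is harmless: `jacDet p q ≠ 0` forces `p₂ + q₂ ≥ 1`. -/
def jacDet (p q : ℤ × ℕ) : ℤ := p.1 * q.2 - p.2 * q.1

def jacExp (l : ℕ) (p q : ℤ × ℕ) : ℤ × ℕ := (p.1 + q.1 - l, p.2 + q.2 - 1)

lemma one_le_add_snd_of_jacDet_ne_zero {p q : ℤ × ℕ} (h : jacDet p q ≠ 0) :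
    1 ≤ p.2 + q.2 := by
  by_contra! hlt
  obtain ⟨hp, hq⟩ : p.2 = 0 ∧ q.2 = 0 := by omega
  simp [jacDet, hp, hq] at h

lemma pt_injective {l : ℕ} (hl : 0 < l) : Function.Injective (pt l) := by
  intro p q h
  have hl0 : (l : ℚ) ≠ 0 := Nat.cast_ne_zero.2 hl.ne'
  simp only [pt, Prod.mk.injEq, div_left_inj' hl0, Int.cast_inj, Nat.cast_inj] at h
  exact Prod.ext h.1 h.2

lemma pt_jacExp {l : ℕ} (hl : 0 < l) {p q : ℤ × ℕ} (h : jacDet p q ≠ 0) :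
    pt l (jacExp l p q) = pt l p + pt l q - (1, 1) := by
  have hl0 : (l : ℚ) ≠ 0 := Nat.cast_ne_zero.2 hl.ne'
  ext
  · simp only [pt, jacExp, Prod.fst_add, Prod.fst_sub]
    push_cast
    field_simp
  · simp only [pt, jacExp, Prod.snd_add, Prod.snd_sub]
    push_cast [one_le_add_snd_of_jacDet_ne_zero h]
    ring

lemma aligned_pt_iff {l : ℕ} (hl : 0 < l) (p q : ℤ × ℕ) :
    Aligned (pt l p) (pt l q) ↔ jacDet p q = 0 := by
  have hl0 : (l : ℚ) ≠ 0 := Nat.cast_ne_zero.2 hl.ne'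
  have : cross (pt l p) (pt l q) = (jacDet p q : ℚ) / l := by
    simp only [cross, pt, jacDet]
    push_cast
    ring
  rw [Aligned, this, div_eq_zero_iff, Int.cast_eq_zero, or_iff_left hl0]

lemma eq_of_dot_eq_of_cross_eq {u A B : ℚ × ℚ} (hu : u ≠ 0) (hdot : dot u A = dot u B)
    (hcross : cross u A = cross u B) : A = B := by
  simp only [dot, cross] at hdot hcross
  have hnorm : u.1 ^ 2 + u.2 ^ 2 ≠ 0 := by
    intro h0
    obtain ⟨h1, h2⟩ := (add_eq_zero_iff_of_nonneg (sq_nonneg _) (sq_nonneg _)).1 h0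
    exact hu (Prod.ext (pow_eq_zero_iff two_ne_zero |>.1 h1) (pow_eq_zero_iff two_ne_zero |>.1 h2))
  ext
  · apply mul_left_cancel₀ hnorm
    linear_combination u.1 * hdot - u.2 * hcross
  · apply mul_left_cancel₀ hnorm
    linear_combination u.2 * hdot + u.1 * hcross

lemma IsDirV.dq_ne_zero {d : ℤ × ℤ} (hd : IsDirV d) : dq d ≠ 0 := by
  intro h0
  simp only [dq, Prod.mk_eq_zero, Int.cast_eq_zero] at h0
  simp [IsDirV, h0] at hd

lemma eq_and_eq_of_add_le_of_injOn {α : Type*} {f : α → ℚ} {s t : Set α}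
    (hs : Set.InjOn f s) (ht : Set.InjOn f t) {a₀ b₀ a b : α}
    (ha₀ : a₀ ∈ s) (ha₀min : ∀ x ∈ s, f a₀ ≤ f x) (hb₀ : b₀ ∈ t) (hb₀min : ∀ y ∈ t, f b₀ ≤ f y)
    (ha : a ∈ s) (hb : b ∈ t) (hle : f a + f b ≤ f a₀ + f b₀) : a = a₀ ∧ b = b₀ := by
  have ha' := ha₀min a ha
  have hb' := hb₀min b hb
  exact ⟨hs ha ha₀ (by linarith), ht hb hb₀ (by linarith)⟩

def crossHom (u : ℚ × ℚ) : ℚ × ℚ →+ ℚ :=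
  AddMonoidHom.mk' (cross u) fun A B => by
    simp only [cross, Prod.fst_add, Prod.snd_add]
    ring

section

variable {K : Type*} [Field K]

lemma single_sub_single_eq_single_add_sub_one (A : ℤ) (s t : ℕ) (u v : K) :
    (AddMonoidAlgebra.single ((A, s + (t - 1)) : ℤ × ℕ) (u * (t : K)) : Ll K)
      - AddMonoidAlgebra.single ((A, (s - 1) + t) : ℤ × ℕ) (v * (s : K))
      = AddMonoidAlgebra.single ((A, s + t - 1) : ℤ × ℕ) (u * (t : K) - v * (s : K)) := by
  rcases Nat.eq_zero_or_pos s with rfl | hs <;> rcases Nat.eq_zero_or_pos t with rfl | ht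
  · simp
  · rw [show 0 + (t - 1) = 0 + t - 1 by omega]
    simp only [Nat.cast_zero, mul_zero, AddMonoidAlgebra.single_zero, sub_zero]
  · rw [show (s - 1) + 0 = s + 0 - 1 by omega]
    simp only [Nat.cast_zero, mul_zero, AddMonoidAlgebra.single_zero, zero_sub,
      AddMonoidAlgebra.single_neg]
  · rw [show s + (t - 1) = s + t - 1 by omega, show (s - 1) + t = s + t - 1 by omega,
      ← AddMonoidAlgebra.single_sub]

lemma br_eq_sum (l : ℕ) (P Q : Ll K) :
    br l P Q = ∑ p ∈ P.coeff.support, ∑ q ∈ Q.coeff.support,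
      AddMonoidAlgebra.single (jacExp l p q)
        (P.coeff p * Q.coeff q * ((jacDet p q : K) / l)) := by
  simp only [br, dX, dY, Finsupp.sum, AddMonoidAlgebra.ofCoeff_sum,
    AddMonoidAlgebra.ofCoeff_single]
  rw [Finset.sum_mul, Finset.sum_mul, ← Finset.sum_sub_distrib]
  refine Finset.sum_congr rfl fun p _ => ?_
  rw [Finset.mul_sum, Finset.mul_sum, ← Finset.sum_sub_distrib]
  refine Finset.sum_congr rfl fun q _ => ?_
  rw [AddMonoidAlgebra.single_mul_single, AddMonoidAlgebra.single_mul_single,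
    Prod.mk_add_mk, Prod.mk_add_mk,
    show (p.1 - (l : ℤ)) + q.1 = p.1 + q.1 - l by ring,
    show p.1 + (q.1 - (l : ℤ)) = p.1 + q.1 - l by ring,
    show P.coeff p * ((p.1 : K) / l) * (Q.coeff q * q.2)
        = P.coeff p * ((p.1 : K) / l) * Q.coeff q * q.2 by ring,
    show P.coeff p * p.2 * (Q.coeff q * ((q.1 : K) / l))
        = P.coeff p * Q.coeff q * ((q.1 : K) / l) * p.2 by ring,
    single_sub_single_eq_single_add_sub_one, jacExp, jacDet]
  congr 1
  push_cast
  ring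

lemma coeff_br_apply (l : ℕ) (P Q : Ll K) (m : ℤ × ℕ) :
    (br l P Q).coeff m = ∑ p ∈ P.coeff.support, ∑ q ∈ Q.coeff.support,
      if jacExp l p q = m then P.coeff p * Q.coeff q * ((jacDet p q : K) / l) else 0 := by
  simp only [br_eq_sum, AddMonoidAlgebra.coeff_sum, Finset.sum_apply',
    AddMonoidAlgebra.coeff_single, Finsupp.single_apply]

lemma exists_of_mem_support_br {l : ℕ} {P Q : Ll K} {m : ℤ × ℕ}
    (hm : m ∈ (br l P Q).coeff.support) :
    ∃ p ∈ P.coeff.support, ∃ q ∈ Q.coeff.support, jacExp l p q = m ∧ jacDet p q ≠ 0 := by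
  rw [Finsupp.mem_support_iff, coeff_br_apply] at hm
  obtain ⟨p, hp, hne⟩ := Finset.exists_ne_zero_of_sum_ne_zero hm
  obtain ⟨q, hq, hne⟩ := Finset.exists_ne_zero_of_sum_ne_zero hne
  rw [ne_eq, ite_eq_right_iff, Classical.not_imp] at hne
  exact ⟨p, hp, q, hq, hne.1, fun h0 => hne.2 (by simp [h0])⟩

lemma coeff_br_jacExp_of_unique {l : ℕ} {P Q : Ll K} {p₀ q₀ : ℤ × ℕ}
    (hp₀ : p₀ ∈ P.coeff.support) (hq₀ : q₀ ∈ Q.coeff.support)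
    (huniq : ∀ p ∈ P.coeff.support, ∀ q ∈ Q.coeff.support,
      jacExp l p q = jacExp l p₀ q₀ → jacDet p q ≠ 0 → p = p₀ ∧ q = q₀) :
    (br l P Q).coeff (jacExp l p₀ q₀) = P.coeff p₀ * Q.coeff q₀ * ((jacDet p₀ q₀ : K) / l) := by
  have hvanish : ∀ p ∈ P.coeff.support, ∀ q ∈ Q.coeff.support, (p, q) ≠ (p₀, q₀) →
      (if jacExp l p q = jacExp l p₀ q₀
        then P.coeff p * Q.coeff q * ((jacDet p q : K) / l) else 0) = 0 := by
    intro p hp q hq hne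
    split_ifs with hexp
    · by_cases hdet : jacDet p q = 0
      · simp [hdet]
      · exact absurd (Prod.ext_iff.2 (huniq p hp q hq hexp hdet)) hne
    · rfl
  rw [coeff_br_apply, Finset.sum_eq_single_of_mem p₀ hp₀, Finset.sum_eq_single_of_mem q₀ hq₀,
    if_pos rfl]
  · exact fun q hq hne => hvanish p₀ hp₀ q hq (by simp [hne])
  · exact fun p hp hne => Finset.sum_eq_zero fun q hq => hvanish p hp q hq (by simp [hne])

lemma not_aligned_iff_of_forall_le [CharZero K] {l : ℕ} (hl : 0 < l) (φ : ℚ × ℚ →+ ℚ)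
    {F G : Ll K} {p₀ q₀ m₀ : ℤ × ℕ} (hF : Set.InjOn (φ ∘ pt l) F.coeff.support)
    (hG : Set.InjOn (φ ∘ pt l) G.coeff.support)
    (hp₀ : p₀ ∈ F.coeff.support) (hp₀min : ∀ p ∈ F.coeff.support, φ (pt l p₀) ≤ φ (pt l p))
    (hq₀ : q₀ ∈ G.coeff.support) (hq₀min : ∀ q ∈ G.coeff.support, φ (pt l q₀) ≤ φ (pt l q))
    (hm₀ : m₀ ∈ (br l F G).coeff.support)
    (hm₀min : ∀ m ∈ (br l F G).coeff.support, φ (pt l m₀) ≤ φ (pt l m)) :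
    ¬ Aligned (pt l p₀) (pt l q₀) ↔ pt l p₀ + pt l q₀ - (1, 1) = pt l m₀ := by
  have huniq : ∀ p ∈ F.coeff.support, ∀ q ∈ G.coeff.support,
      φ (pt l p) + φ (pt l q) ≤ φ (pt l p₀) + φ (pt l q₀) → p = p₀ ∧ q = q₀ :=
    fun p hp q hq => eq_and_eq_of_add_le_of_injOn hF hG hp₀ hp₀min hq₀ hq₀min hp hq
  have hφ : ∀ p q, jacDet p q ≠ 0 →
      φ (pt l (jacExp l p q)) = φ (pt l p) + φ (pt l q) - φ (1, 1) := by
    intro p q hdet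
    rw [pt_jacExp hl hdet, map_sub, map_add]
  obtain ⟨p, hp, q, hq, rfl, hdet⟩ := exists_of_mem_support_br hm₀
  rw [pt_jacExp hl hdet]
  constructor
  · intro hal
    rw [aligned_pt_iff hl] at hal
    have hmem : jacExp l p₀ q₀ ∈ (br l F G).coeff.support := by
      rw [Finsupp.mem_support_iff, coeff_br_jacExp_of_unique hp₀ hq₀]
      · exact mul_ne_zero (mul_ne_zero (Finsupp.mem_support_iff.1 hp₀)
          (Finsupp.mem_support_iff.1 hq₀))
          (div_ne_zero (Int.cast_ne_zero.2 hal) (Nat.cast_ne_zero.2 hl.ne'))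
      · intro p' hp' q' hq' hexp hdet'
        have hsum := congrArg (φ ∘ pt l) hexp
        simp only [Function.comp_apply, hφ _ _ hdet', hφ _ _ hal] at hsum
        exact huniq p' hp' q' hq' (by linarith)
    have hle := hm₀min _ hmem
    rw [hφ p q hdet, hφ p₀ q₀ hal] at hle
    obtain ⟨rfl, rfl⟩ := huniq p hp q hq (by linarith)
    rfl
  · intro heq
    have hsum := congrArg φ heq
    simp only [map_sub, map_add] at hsum
    obtain ⟨rfl, rfl⟩ := huniq p hp q hq (by linarith)
    rwa [aligned_pt_iff hl]

lemma lead_coeff_support_nonempty (l : ℕ) (ρ σ : ℤ) {P : Ll K} (hP : P ≠ 0) :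
    (lead l ρ σ P).coeff.support.Nonempty := by
  have hs : P.coeff.support.Nonempty :=
    Finsupp.support_nonempty_iff.2 (mt AddMonoidAlgebra.coeff_eq_zero.1 hP)
  obtain ⟨p, hp, hmax⟩ := Finset.exists_mem_eq_sup P.coeff.support hs
    fun p => ((dg l ρ σ p : ℚ) : WithBot ℚ)
  refine ⟨p, ?_⟩
  rw [lead, AddMonoidAlgebra.coeff_ofCoeff, Finsupp.support_filter, Finset.mem_filter]
  exact ⟨hp, hmax.symm⟩

lemma dg_eq_of_mem_lead {l : ℕ} {ρ σ : ℤ} {P : Ll K} {p q : ℤ × ℕ}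
    (hp : p ∈ (lead l ρ σ P).coeff.support) (hq : q ∈ (lead l ρ σ P).coeff.support) :
    dg l ρ σ p = dg l ρ σ q := by
  rw [lead, AddMonoidAlgebra.coeff_ofCoeff, Finsupp.support_filter, Finset.mem_filter] at hp hq
  exact_mod_cast hp.2.trans hq.2.symm

lemma injOn_cross_pt_lead {l : ℕ} (hl : 0 < l) {ρ σ : ℤ} (hu : dq (ρ, σ) ≠ 0) (P : Ll K) :
    Set.InjOn (crossHom (dq (ρ, σ)) ∘ pt l) (lead l ρ σ P).coeff.support := by
  intro p hp q hq hcross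
  refine pt_injective hl (eq_of_dot_eq_of_cross_eq hu ?_ hcross)
  exact dg_eq_of_mem_lead hp hq

lemma exists_stPt_eq (l : ℕ) (ρ σ : ℤ) {P : Ll K} (hP : P ≠ 0) :
    ∃ p₀ ∈ (lead l ρ σ P).coeff.support, stPt l ρ σ P = pt l p₀ ∧
      ∀ p ∈ (lead l ρ σ P).coeff.support,
        crossHom (dq (ρ, σ)) (pt l p₀) ≤ crossHom (dq (ρ, σ)) (pt l p) := by
  have hne := lead_coeff_support_nonempty l ρ σ hP
  obtain ⟨hmem, hmin⟩ := Classical.choose_spec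
    ((lead l ρ σ P).coeff.support.exists_min_image (fun p => cross (dq (ρ, σ)) (pt l p)) hne)
  exact ⟨_, hmem, by rw [stPt, dif_pos hne], hmin⟩

lemma exists_enPt_eq (l : ℕ) (ρ σ : ℤ) {P : Ll K} (hP : P ≠ 0) :
    ∃ p₁ ∈ (lead l ρ σ P).coeff.support, enPt l ρ σ P = pt l p₁ ∧
      ∀ p ∈ (lead l ρ σ P).coeff.support,
        (-crossHom (dq (ρ, σ))) (pt l p₁) ≤ (-crossHom (dq (ρ, σ))) (pt l p) := by
  have hne := lead_coeff_support_nonempty l ρ σ hP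
  obtain ⟨hmem, hmax⟩ := Classical.choose_spec
    ((lead l ρ σ P).coeff.support.exists_max_image (fun p => cross (dq (ρ, σ)) (pt l p)) hne)
  exact ⟨_, hmem, by rw [enPt, dif_pos hne], fun p hp => neg_le_neg (hmax p hp)⟩

end

/-- Proposition 2.4.  If `[ℓ_{ρ,σ}(P), ℓ_{ρ,σ}(Q)] = ℓ_{ρ,σ}(R)` then:
(1) `st_{ρ,σ}(P) ≁ st_{ρ,σ}(Q)` iff `st_{ρ,σ}(P) + st_{ρ,σ}(Q) − (1,1) = st_{ρ,σ}(R)`;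
(2) `en_{ρ,σ}(P) ≁ en_{ρ,σ}(Q)` iff `en_{ρ,σ}(P) + en_{ρ,σ}(Q) − (1,1) = en_{ρ,σ}(R)`. -/
theorem statement4 (l : ℕ) (hl : 0 < l) (ρ σ : ℤ) (hdir : IsDirV (ρ, σ))
    (P Q R : Ll K) (hP : P ≠ 0) (hQ : Q ≠ 0) (hR : R ≠ 0)
    (h : br l (lead l ρ σ P) (lead l ρ σ Q) = lead l ρ σ R) :
    (¬ Aligned (stPt l ρ σ P) (stPt l ρ σ Q) ↔
      stPt l ρ σ P + stPt l ρ σ Q - (1, 1) = stPt l ρ σ R) ∧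
    (¬ Aligned (enPt l ρ σ P) (enPt l ρ σ Q) ↔
      enPt l ρ σ P + enPt l ρ σ Q - (1, 1) = enPt l ρ σ R) := by
  have hinj := injOn_cross_pt_lead hl hdir.dq_ne_zero (K := K)
  obtain ⟨p₀, hp₀, hPst, hp₀min⟩ := exists_stPt_eq l ρ σ hP
  obtain ⟨q₀, hq₀, hQst, hq₀min⟩ := exists_stPt_eq l ρ σ hQ
  obtain ⟨m₀, hm₀, hRst, hm₀min⟩ := exists_stPt_eq l ρ σ hR
  obtain ⟨p₁, hp₁, hPen, hp₁min⟩ := exists_enPt_eq l ρ σ hP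
  obtain ⟨q₁, hq₁, hQen, hq₁min⟩ := exists_enPt_eq l ρ σ hQ
  obtain ⟨m₁, hm₁, hRen, hm₁min⟩ := exists_enPt_eq l ρ σ hR
  rw [← h] at hm₀ hm₀min hm₁ hm₁min
  rw [hPst, hQst, hRst, hPen, hQen, hRen]
  exact ⟨not_aligned_iff_of_forall_le hl _ (hinj P) (hinj Q) hp₀ hp₀min hq₀ hq₀min hm₀ hm₀min,
    not_aligned_iff_of_forall_le hl _ (neg_injective.comp_injOn (hinj P))
      (neg_injective.comp_injOn (hinj Q)) hp₁ hp₁min hq₁ hq₁min hm₁ hm₁min⟩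

end JC
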